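/- In the name-boundedness type system, a well-typed recursive process contains at most one occurrence of its recursion variable: if all binding occurrences of recursion variables in μX.P are distinct and Γ, Δ ⊢ μX.P, then there is at most one occurrence of X in P. -/

import Mathlib

inductive Polarity | pos | neg | eps
deriving DecidableEq, Repr

def Polarity.dual : Polarity → Polarity
  | pos => neg
  | neg => pos
  | eps => eps

mutual
inductive Ty where
  | sess : STy → Ty
  | pair : STy → STy → Ty
  | chan : Ty → Ty
inductive STy where
  | send : Ty → STy → STy
  | recv : Ty → STy → STy
  | fin : STy
end

/-- Duality of endpoint session types. -/
def STy.dual : STy → STy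
  | STy.send T S => STy.recv T (STy.dual S)
  | STy.recv T S => STy.send T (STy.dual S)
  | STy.fin => STy.fin

/-- Depth of an endpoint session type. -/
def STy.depth : STy → ℕ
  | STy.send _ S => 1 + STy.depth S
  | STy.recv _ S => 1 + STy.depth S
  | STy.fin => 0

/-- Processes of the π-calculus with recursion, polarized names and typed restriction. -/
inductive Proc where
  | inp : ℕ → Polarity → ℕ → Proc → Proc          -- x^p(y).P
  | out : ℕ → Polarity → ℕ → Polarity → Proc → Proc -- x^p⟨y^q⟩.P
  | par : Proc → Proc → Proc
  | nu  : ℕ → Ty → Proc → Proc                    -- (νx:T)P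
  | mu  : ℕ → Proc → Proc                         -- μX.P
  | rvar : ℕ → Proc                               -- X
  | nil : Proc

open Proc

/-- Free names of a process. -/
def fn : Proc → Set ℕ
  | inp x _ y P => {x} ∪ (fn P \ {y})
  | out x _ y _ P => ({x} ∪ {y}) ∪ fn P
  | par P Q => fn P ∪ fn Q
  | nu x _ P => fn P \ {x}
  | mu _ P => fn P
  | rvar _ => ∅
  | nil => ∅

/-- Structural congruence. -/
inductive SC : Proc → Proc → Prop
  | nuComm (x y : ℕ) (T T' : Ty) (P : Proc) :
      SC (nu x T (nu y T' P)) (nu y T' (nu x T P))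
  | scopeExt (x : ℕ) (T : Ty) (P Q : Proc) (h : x ∉ fn Q) :
      SC (par (nu x T P) Q) (nu x T (par P Q))
  | parNil (P : Proc) : SC (par P nil) P
  | nuNil (x : ℕ) (T : Ty) : SC (nu x T nil) nil
  | parComm (P Q : Proc) : SC (par P Q) (par Q P)
  | parAssoc (P Q R : Proc) : SC (par (par P Q) R) (par P (par Q R))
  | refl (P : Proc) : SC P P
  | symm {P Q} : SC P Q → SC Q P
  | trans {P Q R} : SC P Q → SC Q R → SC P R
  | inpC (x : ℕ) (p : Polarity) (y : ℕ) {P P'} : SC P P' → SC (inp x p y P) (inp x p y P')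
  | outC (x : ℕ) (p : Polarity) (y : ℕ) (q : Polarity) {P P'} :
      SC P P' → SC (out x p y q P) (out x p y q P')
  | parC {P P' Q Q'} : SC P P' → SC Q Q' → SC (par P Q) (par P' Q')
  | nuC (x : ℕ) (T : Ty) {P P'} : SC P P' → SC (nu x T P) (nu x T P')
  | muC (X : ℕ) {P P'} : SC P P' → SC (mu X P) (mu X P')

/-- Maximal number of active nested restrictions. -/
def nest : Proc → ℕ
  | inp _ _ _ _ => 0
  | out _ _ _ _ _ => 0
  | par P Q => max (nest P) (nest Q)
  | nu _ _ P => 1 + nest P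
  | mu _ P => nest P
  | rvar _ => 0
  | nil => 0

/-- Restriction depth: minimal nesting up to structural congruence. -/
noncomputable def depth (P : Proc) : ℕ := sInf { n | ∃ Q, SC Q P ∧ nest Q = n }

/-- Substitution of the polarized name b^q for the name a in a process: P[b^q/a]. -/
def substName : Proc → ℕ → ℕ → Polarity → Proc
  | Proc.inp x p y P, a, b, q =>
      Proc.inp (if x = a then b else x) (if x = a then q else p) y
        (if y = a then P else substName P a b q)
  | Proc.out x p y r P, a, b, q =>
      Proc.out (if x = a then b else x) (if x = a then q else p)
        (if y = a then b else y) (if y = a then q else r) (substName P a b q)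
  | Proc.par P Q, a, b, q => Proc.par (substName P a b q) (substName Q a b q)
  | Proc.nu x T P, a, b, q => if x = a then Proc.nu x T P else Proc.nu x T (substName P a b q)
  | Proc.mu X P, a, b, q => Proc.mu X (substName P a b q)
  | Proc.rvar X, _, _, _ => Proc.rvar X
  | Proc.nil, _, _, _ => Proc.nil

/-- Substitution of a process R for the recursion variable X: P[R/X]. -/
def substVar : Proc → ℕ → Proc → Proc
  | Proc.inp x p y P, X, R => Proc.inp x p y (substVar P X R)
  | Proc.out x p y q P, X, R => Proc.out x p y q (substVar P X R)
  | Proc.par P Q, X, R => Proc.par (substVar P X R) (substVar Q X R)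
  | Proc.nu x T P, X, R => Proc.nu x T (substVar P X R)
  | Proc.mu Y P, X, R => if Y = X then Proc.mu Y P else Proc.mu Y (substVar P X R)
  | Proc.rvar Y, X, R => if Y = X then R else Proc.rvar Y
  | Proc.nil, _, _ => Proc.nil

/-- The unfolding relation: μX.P > P[μX.P/X], closed under unfolding contexts
C ::= [ ] | P  |  (νx:T)C. -/
inductive Unf : Proc → Proc → Prop
  | unfold (X : ℕ) (P : Proc) : Unf (Proc.mu X P) (substVar P X (Proc.mu X P))
  | ctxPar {P P'} (Q : Proc) : Unf P P' → Unf (Proc.par P Q) (Proc.par P' Q)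
  | ctxNu (x : ℕ) (T : Ty) {P P'} : Unf P P' → Unf (Proc.nu x T P) (Proc.nu x T P')

/-- T↓ : the successor of a type. -/
def tyDown : Ty → Ty
  | Ty.pair (STy.send _ S₂) (STy.recv _ S₂') => Ty.pair S₂ S₂'
  | Ty.chan T => Ty.chan T
  | T => T

/-- Annotated reduction `Red P rec a P'`: P reduces to P' with subject name a;
the flag `rec` records whether recursive unfolding was used. -/
inductive Red : Proc → Bool → ℕ → Proc → Prop
  | com (a : ℕ) (p : Polarity) (x y : ℕ) (q : Polarity) (P₁ P₂ : Proc) :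
      Red (Proc.par (Proc.inp a p x P₁) (Proc.out a p.dual y q P₂)) false a
        (Proc.par (substName P₁ x y q) P₂)
  | par {P P'} (r : Bool) (a : ℕ) (Q : Proc) :
      Red P r a P' → Red (Proc.par P Q) r a (Proc.par P' Q)
  | nu {P P'} (r : Bool) (a x : ℕ) (T : Ty) :
      Red P r a P' →
      Red (Proc.nu x T P) r a (Proc.nu x (if x = a then tyDown T else T) P')
  | unfold {P Q P'} (r : Bool) (a : ℕ) :
      Unf P Q → Red Q r a P' → Red P true a P'
  | struct {P Q Q' P'} (r : Bool) (a : ℕ) :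
      SC P Q → Red Q r a Q' → SC Q' P' → Red P r a P'

/-- Polarized names. -/
abbrev PName := ℕ × Polarity

/-- Type environments: partial functions from polarized names to types. -/
abbrev Env := PName → Option Ty

/-- Recursion environments: partial functions from recursion variables to
type environments. -/
abbrev REnv := ℕ → Option Env

/-- The empty recursion environment Δ_∅. -/
def emptyR : REnv := fun _ => none

/-- Extension Γ, n:T of a type environment. -/
def Env.ext (Γ : Env) (n : PName) (T : Ty) : Env :=
  fun m => if m = n then some T else Γ m

/-- Extension Δ, X:Γ of a recursion environment. -/
def REnv.ext (Δ : REnv) (X : ℕ) (Γ : Env) : REnv :=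
  fun Y => if Y = X then some Γ else Δ Y

/-- Unlimited types: channel types and the terminated endpoint type. -/
def unlimitedTy : Ty → Prop
  | Ty.chan _ => True
  | Ty.sess STy.fin => True
  | _ => False

def isChanTy : Ty → Prop
  | Ty.chan _ => True
  | _ => False

/-- Γ is unlimited if every type in its range is unlimited. -/
def Env.unlimited (Γ : Env) : Prop := ∀ n T, Γ n = some T → unlimitedTy T

/-- Γ is linear if no type in its range is a channel type. -/
def Env.linear (Γ : Env) : Prop := ∀ n T, Γ n = some T → ¬ isChanTy T

/-- The largest linear sub-environment Γ_lin of Γ. -/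
def Env.lin (Γ : Env) : Env := fun n =>
  match Γ n with
  | some (Ty.chan _) => none
  | o => o

/-- Γ is terminal if every type in its range is end or (end,end). -/
def Env.terminal (Γ : Env) : Prop :=
  ∀ n T, Γ n = some T → T = Ty.sess STy.fin ∨ T = Ty.pair STy.fin STy.fin

/-- Addition of type environments (used with disjoint domains). -/
def Env.add (Γ₁ Γ₂ : Env) : Env := fun n =>
  match Γ₁ n with
  | some T => some T
  | none => Γ₂ n

/-- Addition of recursion environments (agreeing on common variables). -/
def REnv.add (Δ₁ Δ₂ : REnv) : REnv := fun X =>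
  match Δ₁ X with
  | some Γ => some Γ
  | none => Δ₂ X

/-- The typing judgement Γ, Δ ⊢ P of the session type system for
name-boundedness: as the depth-boundedness system, but the addition of pairs
(Γ₁,Δ₁) + (Γ₂,Δ₂) in the Par rule requires at least one Δᵢ empty, with Γ₁
unlimited if Δ₁ = Δ_∅ and Γ₂ linear if Δ₂ ≠ Δ_∅. -/
inductive TypedN : Env → REnv → Proc → Prop
  | inOne {Γ : Env} {Δ : REnv} {x : ℕ} {p : Polarity} {y : ℕ} {T₁ : Ty} {S : STy} {P : Proc}
      (hT : T₁ ≠ Ty.sess STy.fin)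
      (h : TypedN ((Γ.ext (x, p) (Ty.sess S)).ext (y, Polarity.eps) T₁) Δ P) :
      TypedN (Γ.ext (x, p) (Ty.sess (STy.recv T₁ S))) Δ (Proc.inp x p y P)
  | inTwo {Γ : Env} {Δ : REnv} {x y : ℕ} {T₁ : Ty} {P : Proc}
      (hT : T₁ ≠ Ty.sess STy.fin)
      (h : TypedN ((Γ.ext (x, Polarity.eps) (Ty.chan T₁)).ext (y, Polarity.eps) T₁) Δ P) :
      TypedN (Γ.ext (x, Polarity.eps) (Ty.chan T₁)) Δ (Proc.inp x Polarity.eps y P)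
  | outOne {Γ : Env} {Δ : REnv} {x : ℕ} {p : Polarity} {y : ℕ} {q : Polarity}
      {T₁ : Ty} {S : STy} {P : Proc}
      (hT : T₁ ≠ Ty.sess STy.fin)
      (h : TypedN (Γ.ext (x, p) (Ty.sess S)) Δ P) :
      TypedN ((Γ.ext (x, p) (Ty.sess (STy.send T₁ S))).ext (y, q) T₁) Δ (Proc.out x p y q P)
  | outTwo {Γ : Env} {Δ : REnv} {x y : ℕ} {q : Polarity} {T₂ : Ty} {P : Proc}
      (hU : unlimitedTy T₂)
      (h : TypedN ((Γ.ext (x, Polarity.eps) (Ty.chan T₂)).ext (y, q) T₂) Δ P) :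
      TypedN ((Γ.ext (x, Polarity.eps) (Ty.chan T₂)).ext (y, q) T₂) Δ
        (Proc.out x Polarity.eps y q P)
  | par {Γ₁ Γ₂ : Env} {Δ₁ Δ₂ : REnv} {P₁ P₂ : Proc}
      (hdisj : ∀ n, Γ₁ n = none ∨ Γ₂ n = none)
      (hagree : ∀ X E₁ E₂, Δ₁ X = some E₁ → Δ₂ X = some E₂ → E₁ = E₂)
      (hone : Δ₁ = emptyR ∨ Δ₂ = emptyR)
      (hu₁ : Δ₁ = emptyR → Γ₁.unlimited)
      (hl₂ : Δ₂ ≠ emptyR → Γ₂.linear)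
      (h₁ : TypedN Γ₁ Δ₁ P₁) (h₂ : TypedN Γ₂ Δ₂ P₂) :
      TypedN (Γ₁.add Γ₂) (Δ₁.add Δ₂) (Proc.par P₁ P₂)
  | session {Γ : Env} {Δ : REnv} {x : ℕ} {S : STy} {P : Proc}
      (h : TypedN ((Γ.ext (x, Polarity.pos) (Ty.sess S)).ext (x, Polarity.neg)
            (Ty.sess (STy.dual S))) Δ P) :
      TypedN Γ Δ (Proc.nu x (Ty.pair S (STy.dual S)) P)
  | chan {Γ : Env} {x : ℕ} {T : Ty} {P : Proc}
      (h : TypedN (Γ.ext (x, Polarity.eps) (Ty.chan T)) emptyR P) :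
      TypedN Γ emptyR (Proc.nu x (Ty.chan T) P)
  | nil {Γ : Env} {Δ : REnv} (h : Γ.unlimited) : TypedN Γ Δ Proc.nil
  | var {Γ : Env} {Δ : REnv} {X : ℕ} {Γ₁ : Env}
      (h₁ : Δ X = some Γ₁)
      (h₂ : ∀ n, (Γ n).isSome → (Γ₁ n).isSome)
      (h₃ : Γ.lin.terminal) :
      TypedN Γ Δ (Proc.rvar X)
  | murec {Γ : Env} {Δ : REnv} {X : ℕ} {P : Proc}
      (h : TypedN Γ (Δ.ext X Γ) P) :
      TypedN Γ Δ (Proc.mu X P)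

/-- The list of binding occurrences of recursion variables in a process. -/
def muBinders : Proc → List ℕ
  | Proc.inp _ _ _ P => muBinders P
  | Proc.out _ _ _ _ P => muBinders P
  | Proc.par P Q => muBinders P ++ muBinders Q
  | Proc.nu _ _ P => muBinders P
  | Proc.mu X P => X :: muBinders P
  | Proc.rvar _ => []
  | Proc.nil => []

/-- The number of occurrences of the recursion variable X in a process. -/
def countVar (X : ℕ) : Proc → ℕ
  | Proc.inp _ _ _ P => countVar X P
  | Proc.out _ _ _ _ P => countVar X P
  | Proc.par P Q => countVar X P + countVar X Q
  | Proc.nu _ _ P => countVar X P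
  | Proc.mu _ P => countVar X P
  | Proc.rvar Y => if Y = X then 1 else 0
  | Proc.nil => 0

/-!
In the Par rule one of the two recursion environments is Δ_∅, and a process typed under a
recursion environment that does not bind X contains no free occurrence of X. So the occurrences
of X never split across a parallel composition, while every other rule has at most one premise.
Distinct binders guarantee that X is not rebound inside P, so every occurrence of X in P is free.
-/

theorem REnv.add_eq_none {Δ₁ Δ₂ : REnv} {X : ℕ} (h : Δ₁.add Δ₂ X = none) :
    Δ₁ X = none ∧ Δ₂ X = none := by
  unfold REnv.add at h
  split at h <;> simp_all

theorem countVar_eq_zero_of_typedN {Γ : Env} {Δ : REnv} {P : Proc} {X : ℕ}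
    (h : TypedN Γ Δ P) : Δ X = none → X ∉ muBinders P → countVar X P = 0 := by
  induction h with
  | inOne _ _ ih | inTwo _ _ ih | outOne _ _ ih | outTwo _ _ ih | session _ ih | chan _ ih =>
    exact ih
  | par _ _ _ _ _ _ _ ih₁ ih₂ =>
    intro hΔ hX
    simp only [muBinders, List.mem_append, not_or] at hX
    obtain ⟨hΔ₁, hΔ₂⟩ := REnv.add_eq_none hΔ
    simp only [countVar, ih₁ hΔ₁ hX.1, ih₂ hΔ₂ hX.2]
  | nil => intros; rfl
  | @var _ _ Y _ hY =>
    intro hΔ _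
    have hYX : Y ≠ X := by rintro rfl; simp [hY] at hΔ
    simp [countVar, hYX]
  | @murec _ _ Y _ _ ih =>
    intro hΔ hX
    simp only [muBinders, List.mem_cons, not_or] at hX
    exact ih (by simp [REnv.ext, hX.1, hΔ]) hX.2

theorem countVar_le_one_of_typedN {Γ : Env} {Δ : REnv} {P : Proc} {X : ℕ}
    (h : TypedN Γ Δ P) (hX : X ∉ muBinders P) : countVar X P ≤ 1 := by
  induction h with
  | inOne _ _ ih | inTwo _ _ ih | outOne _ _ ih | outTwo _ _ ih | session _ ih | chan _ ih =>
    exact ih hX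
  | par _ _ hone _ _ h₁ h₂ ih₁ ih₂ =>
    simp only [muBinders, List.mem_append, not_or] at hX
    simp only [countVar]
    rcases hone with rfl | rfl
    · simpa [countVar_eq_zero_of_typedN h₁ rfl hX.1] using ih₂ hX.2
    · simpa [countVar_eq_zero_of_typedN h₂ rfl hX.2] using ih₁ hX.1
  | nil => simp [countVar]
  | var => simp only [countVar]; split <;> simp
  | murec _ ih =>
    simp only [muBinders, List.mem_cons, not_or] at hX
    exact ih hX.2

/-- In the name-boundedness type system, a well-typed recursive process μX.P
whose binding occurrences of recursion variables are all distinct contains at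
most one occurrence of X in P. -/
theorem one_rec_only (Γ : Env) (Δ : REnv) (X : ℕ) (P : Proc)
    (hdist : (muBinders (Proc.mu X P)).Nodup)
    (h : TypedN Γ Δ (Proc.mu X P)) :
    countVar X P ≤ 1 := by
  cases h with
  | murec hP => exact countVar_le_one_of_typedN hP (List.nodup_cons.mp hdist).1
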